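/- Let V be a profile for the thickness R with V'(0)=0, and extend V to a function on ℝ by setting V(y)=V(R)e^{−√α(y−R)} for y>R and V(y)=V(−R)e^{√α(y+R)} for y<−R. For ρ>0 define E_ρ(V)=(1/2)∫_ℝ |V'(y)|²dy − ∫_{−ρ}^{ρ}F(V(y))dy + (α/2)∫_{|y|>ρ}|V(y)|²dy. Then ρ↦E_ρ(V) is differentiable at ρ=R and (d/dρ)E_ρ(V)|_{ρ=R}=−2F(V(0)). -/

import Mathlib

open Set MeasureTheory Filter Topology

noncomputable def f (lam a u : ℝ) : ℝ := lam * u * (u - a) * (1 - u)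

noncomputable def F (lam a u : ℝ) : ℝ := ∫ v in (0:ℝ)..u, f lam a v

/-- Derivative within the interval `[-R, R]`. -/
noncomputable def pd (R : ℝ) (w : ℝ → ℝ) : ℝ → ℝ := derivWithin w (Set.Icc (-R) R)

/-- A profile for the thickness `R`: a C² function on `[-R,R]` satisfying
`V'' + f(V) = 0` on `(-R,R)` with the Robin boundary conditions
`V'(-R) = √α V(-R)` and `V'(R) = -√α V(R)`. -/
def IsProfile (lam a α R : ℝ) (V : ℝ → ℝ) : Prop :=
  ContDiffOn ℝ 2 V (Set.Icc (-R) R) ∧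
  (∀ y ∈ Set.Ioo (-R) R, pd R (pd R V) y + f lam a (V y) = 0) ∧
  pd R V (-R) = Real.sqrt α * V (-R) ∧
  pd R V R = -Real.sqrt α * V R

/-- A profile is non-trivial if it is not identically zero on `[-R,R]`. -/
def IsNontrivial (R : ℝ) (V : ℝ → ℝ) : Prop :=
  ∃ y ∈ Set.Icc (-R) R, V y ≠ 0

lemma f_continuous (lam a : ℝ) : Continuous (f lam a) := by
  unfold f; fun_prop

lemma F_hasDerivAt (lam a u : ℝ) : HasDerivAt (F lam a) (f lam a u) u :=
  intervalIntegral.integral_hasDerivAt_right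
    ((f_continuous lam a).intervalIntegrable _ _)
    ((f_continuous lam a).stronglyMeasurableAtFilter _ _)
    (f_continuous lam a).continuousAt

lemma F_continuous (lam a : ℝ) : Continuous (F lam a) :=
  continuous_iff_continuousAt.2 fun u => (F_hasDerivAt lam a u).continuousAt

lemma integrableOn_Iio_of_neg {φ : ℝ → ℝ} {c : ℝ}
    (h : IntegrableOn (fun x => φ (-x)) (Ioi (-c))) : IntegrableOn φ (Iio c) := by
  have hpre : (Neg.neg : ℝ → ℝ) ⁻¹' (Iio c) = Ioi (-c) := by
    ext x; simp [neg_lt]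
  have key : (volume : Measure ℝ).restrict (Iio c)
      = Measure.map (Neg.neg : ℝ → ℝ) ((volume : Measure ℝ).restrict (Ioi (-c))) := by
    conv_lhs => rw [← Measure.map_neg_eq_self (volume : Measure ℝ)]
    rw [measurableEmbedding_neg.restrict_map, hpre]
  rw [IntegrableOn, key, measurableEmbedding_neg.integrable_map_iff]
  exact h

lemma vext_continuous {α R : ℝ} (hα : 0 < α) (hR : 0 < R) {V Vext : ℝ → ℝ}
    (hVc : ContinuousOn V (Icc (-R) R))
    (hext1 : ∀ y ∈ Icc (-R) R, Vext y = V y)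
    (hext2 : ∀ y : ℝ, R < y → Vext y = V R * Real.exp (-Real.sqrt α * (y - R)))
    (hext3 : ∀ y : ℝ, y < -R → Vext y = V (-R) * Real.exp (Real.sqrt α * (y + R))) :
    Continuous Vext := by
  have hRR : -R < R := by linarith
  have hmR : (-R) ∈ Icc (-R) R := left_mem_Icc.2 hRR.le
  have hmRr : R ∈ Icc (-R) R := right_mem_Icc.2 hRR.le
  have hcmR : ContinuousAt Vext (-R) := by
    have hl : ContinuousWithinAt Vext (Iic (-R)) (-R) := by
      have hc : ContinuousWithinAt
          (fun y => V (-R) * Real.exp (Real.sqrt α * (y + R))) (Iic (-R)) (-R) :=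
        (by fun_prop :
          Continuous fun y => V (-R) * Real.exp (Real.sqrt α * (y + R))).continuousWithinAt
      apply hc.congr
      · intro y hy
        rcases (mem_Iic.1 hy).lt_or_eq with h | rfl
        · exact hext3 y h
        · rw [hext1 _ hmR, neg_add_cancel, mul_zero, Real.exp_zero, mul_one]
      · rw [hext1 _ hmR, neg_add_cancel, mul_zero, Real.exp_zero, mul_one]
    have hr : ContinuousWithinAt Vext (Ici (-R)) (-R) := by
      have hIcc : Icc (-R) R ∈ 𝓝[Ici (-R)] (-R) := by
        rw [← Ici_inter_Iic]
        exact inter_mem self_mem_nhdsWithin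
          (mem_nhdsWithin_of_mem_nhds (Iic_mem_nhds hRR))
      have hV' : ContinuousWithinAt V (Ici (-R)) (-R) :=
        (hVc _ hmR).mono_of_mem_nhdsWithin hIcc
      exact hV'.congr_of_eventuallyEq
        (eventually_of_mem hIcc fun y hy => hext1 y hy) (hext1 _ hmR)
    have h := hl.union hr
    rwa [Iic_union_Ici, continuousWithinAt_univ] at h
  have hcR : ContinuousAt Vext R := by
    have hl : ContinuousWithinAt Vext (Iic R) R := by
      have hIcc : Icc (-R) R ∈ 𝓝[Iic R] R := by
        rw [← Ici_inter_Iic]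
        exact inter_mem (mem_nhdsWithin_of_mem_nhds (Ici_mem_nhds hRR))
          self_mem_nhdsWithin
      have hV' : ContinuousWithinAt V (Iic R) R :=
        (hVc _ hmRr).mono_of_mem_nhdsWithin hIcc
      exact hV'.congr_of_eventuallyEq
        (eventually_of_mem hIcc fun y hy => hext1 y hy) (hext1 _ hmRr)
    have hr : ContinuousWithinAt Vext (Ici R) R := by
      have hc : ContinuousWithinAt
          (fun y => V R * Real.exp (-Real.sqrt α * (y - R))) (Ici R) R :=
        (by fun_prop :
          Continuous fun y => V R * Real.exp (-Real.sqrt α * (y - R))).continuousWithinAt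
      apply hc.congr
      · intro y hy
        rcases (mem_Ici.1 hy).lt_or_eq with h | h
        · exact hext2 y h
        · rw [← h, hext1 _ hmRr, sub_self, mul_zero, Real.exp_zero, mul_one]
      · rw [hext1 _ hmRr, sub_self, mul_zero, Real.exp_zero, mul_one]
    have h := hl.union hr
    rwa [Iic_union_Ici, continuousWithinAt_univ] at h
  rw [continuous_iff_continuousAt]
  intro x
  rcases lt_trichotomy x (-R) with hx | hx | hx
  · have hev : (fun y => V (-R) * Real.exp (Real.sqrt α * (y + R))) =ᶠ[𝓝 x] Vext := by
      filter_upwards [Iio_mem_nhds hx] with y hy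
      exact (hext3 y hy).symm
    exact ContinuousAt.congr
      ((by fun_prop :
        Continuous fun y => V (-R) * Real.exp (Real.sqrt α * (y + R))).continuousAt) hev
  · exact hx ▸ hcmR
  rcases lt_trichotomy x R with hx2 | hx2 | hx2
  · have hev : V =ᶠ[𝓝 x] Vext := by
      filter_upwards [Ioo_mem_nhds hx hx2] with y hy
      exact (hext1 y (Ioo_subset_Icc_self hy)).symm
    exact ContinuousAt.congr ((hVc x ⟨hx.le, hx2.le⟩).continuousAt (Icc_mem_nhds hx hx2)) hev
  · exact hx2 ▸ hcR
  · have hev : (fun y => V R * Real.exp (-Real.sqrt α * (y - R))) =ᶠ[𝓝 x] Vext := by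
      filter_upwards [Ioi_mem_nhds hx2] with y hy
      exact (hext2 y hy).symm
    exact ContinuousAt.congr
      ((by fun_prop :
        Continuous fun y => V R * Real.exp (-Real.sqrt α * (y - R))).continuousAt) hev

/-- Derivative of the energy with respect to the thickness: if `V` is a profile
with `V'(0) = 0`, extended by its exponential tails to `ℝ`, then
`ρ ↦ E_ρ(V)` is differentiable at `ρ = R` with derivative `-2 F(V(0))`. -/
theorem energy_derivative_in_thickness (lam a α R : ℝ)
    (hlam : 0 < lam) (ha0 : 0 < a) (ha1 : a < 1/2) (hα : 0 < α) (hR : 0 < R)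
    (V : ℝ → ℝ) (hV : IsProfile lam a α R V)
    (hV0 : pd R V 0 = 0)
    (Vext : ℝ → ℝ)
    (hext1 : ∀ y ∈ Set.Icc (-R) R, Vext y = V y)
    (hext2 : ∀ y : ℝ, R < y → Vext y = V R * Real.exp (-Real.sqrt α * (y - R)))
    (hext3 : ∀ y : ℝ, y < -R → Vext y = V (-R) * Real.exp (Real.sqrt α * (y + R))) :
    HasDerivAt
      (fun ρ : ℝ =>
        (1/2) * (∫ y : ℝ, (deriv Vext y)^2)
          - (∫ y in (-ρ)..ρ, F lam a (Vext y))
          + (α/2) * (∫ y in {z : ℝ | ρ < |z|}, (Vext y)^2))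
      (-2 * F lam a (V 0)) R := by
  obtain ⟨hC2, hODE, hBCl, hBCr⟩ := hV
  have hRR : (-R) < R := by linarith
  have hmR : (-R) ∈ Icc (-R) R := left_mem_Icc.2 hRR.le
  have hmRr : R ∈ Icc (-R) R := right_mem_Icc.2 hRR.le
  have hm0 : (0:ℝ) ∈ Icc (-R) R := ⟨by linarith, hR.le⟩
  have hUD : UniqueDiffOn ℝ (Icc (-R) R) := uniqueDiffOn_Icc hRR
  have hVcont : ContinuousOn V (Icc (-R) R) := hC2.continuousOn
  have hWcd : ContDiffOn ℝ 1 (pd R V) (Icc (-R) R) :=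
    hC2.derivWithin hUD (by norm_num)
  -- energy conservation
  set H : ℝ → ℝ := fun y => (1/2) * (pd R V y)^2 + F lam a (V y) with hHdef
  have hHderiv : ∀ y ∈ Ioo (-R) R, HasDerivAt H 0 y := by
    intro y hy
    have hnh : Icc (-R) R ∈ 𝓝 y := Icc_mem_nhds hy.1 hy.2
    have hVdiff : DifferentiableWithinAt ℝ V (Icc (-R) R) y :=
      (hC2.differentiableOn (by norm_num)) y (Ioo_subset_Icc_self hy)
    have hVd : HasDerivAt V (pd R V y) y := by
      have h1 : pd R V y = deriv V y := derivWithin_of_mem_nhds hnh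
      rw [h1]
      exact (hVdiff.differentiableAt hnh).hasDerivAt
    have hWdiff : DifferentiableWithinAt ℝ (pd R V) (Icc (-R) R) y :=
      (hWcd.differentiableOn (by norm_num)) y (Ioo_subset_Icc_self hy)
    have hWd : HasDerivAt (pd R V) (-(f lam a (V y))) y := by
      have h2 : pd R (pd R V) y = deriv (pd R V) y := derivWithin_of_mem_nhds hnh
      have h3 : pd R (pd R V) y = -(f lam a (V y)) := by
        have := hODE y hy; linarith
      have hd := (hWdiff.differentiableAt hnh).hasDerivAt
      rw [← h2, h3] at hd
      exact hd
    have hF : HasDerivAt (fun t => F lam a (V t)) (f lam a (V y) * pd R V y) y :=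
      (F_hasDerivAt lam a (V y)).comp y hVd
    have hsq : HasDerivAt (fun t => (1/2) * (pd R V t)^2)
        ((1/2) * ((2:ℕ) * (pd R V y) ^ 1 * (-(f lam a (V y))))) y :=
      (hWd.pow 2).const_mul (1/2)
    have htot := hsq.add hF
    refine htot.congr_deriv ?_
    push_cast
    ring
  have hHcont : ContinuousOn H (Icc (-R) R) := by
    apply ContinuousOn.add
    · exact continuousOn_const.mul (hWcd.continuousOn.pow 2)
    · exact (F_continuous lam a).comp_continuousOn hVcont
  have hHR : H R = H 0 := by
    have hc : ContinuousOn H (Icc 0 R) := hHcont.mono (Icc_subset_Icc (by linarith) le_rfl)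
    have hd : ∀ x ∈ Ico 0 R, HasDerivWithinAt H 0 (Ici x) x := fun x hx =>
      (hHderiv x ⟨by linarith [hx.1], hx.2⟩).hasDerivWithinAt
    exact constant_of_has_deriv_right_zero hc hd R (right_mem_Icc.2 hR.le)
  have hHmR : H (-R) = H 0 := by
    have hc : ContinuousOn (fun y => H (-y)) (Icc 0 R) := by
      apply hHcont.comp continuous_neg.continuousOn
      intro y hy
      exact ⟨by simp; linarith [hy.2], by simp; linarith [hy.1]⟩
    have hd : ∀ x ∈ Ico 0 R, HasDerivWithinAt (fun y => H (-y)) 0 (Ici x) x := by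
      intro x hx
      have h1 : HasDerivAt H 0 (-x) := hHderiv (-x) ⟨by linarith [hx.2], by linarith [hx.1]⟩
      have h2 := h1.comp x (hasDerivAt_neg x)
      simpa [Function.comp_def] using h2.hasDerivWithinAt
    have h3 := constant_of_has_deriv_right_zero hc hd R (right_mem_Icc.2 hR.le)
    simpa using h3
  have hsqrt : Real.sqrt α ^ 2 = α := Real.sq_sqrt hα.le
  have hH0 : H 0 = F lam a (V 0) := by
    simp [hHdef, hV0]
  have hkeyR : F lam a (V R) + (α/2) * (V R)^2 = F lam a (V 0) := by
    have h1 : H R = (1/2) * (α * (V R)^2) + F lam a (V R) := by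
      simp only [hHdef, hBCr]
      rw [mul_pow, neg_sq, hsqrt]
    rw [h1, hH0] at hHR
    linarith
  have hkeymR : F lam a (V (-R)) + (α/2) * (V (-R))^2 = F lam a (V 0) := by
    have h1 : H (-R) = (1/2) * (α * (V (-R))^2) + F lam a (V (-R)) := by
      simp only [hHdef, hBCl]
      rw [mul_pow, hsqrt]
    rw [h1, hH0] at hHmR
    linarith
  -- continuity of the extension
  have hVextCont : Continuous Vext := vext_continuous hα hR hVcont hext1 hext2 hext3
  have hgc : Continuous (fun y => (Vext y)^2) := hVextCont.pow 2
  have hsp : 0 < Real.sqrt α := Real.sqrt_pos.2 hα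
  have hb : 0 < 2 * Real.sqrt α := by positivity
  -- integrability of the square on the tails
  have hgIoi : IntegrableOn (fun y => (Vext y)^2) (Ioi 0) := by
    rw [← Ioc_union_Ioi_eq_Ioi hR.le]
    apply IntegrableOn.union
    · exact hgc.integrableOn_Ioc
    · have he := (exp_neg_integrableOn_Ioi R hb).const_mul
        ((V R)^2 * Real.exp (2 * Real.sqrt α * R))
      refine MeasureTheory.IntegrableOn.congr_fun he ?_ measurableSet_Ioi
      intro y hy
      show V R ^ 2 * Real.exp (2 * Real.sqrt α * R) * Real.exp (-(2 * Real.sqrt α) * y)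
        = Vext y ^ 2
      rw [hext2 y hy, mul_pow, pow_two (Real.exp _), ← Real.exp_add,
        mul_assoc, ← Real.exp_add]
      congr 2
      ring
  have hgIio : IntegrableOn (fun y => (Vext y)^2) (Iio 0) := by
    apply integrableOn_Iio_of_neg (c := 0)
    rw [neg_zero, ← Ioc_union_Ioi_eq_Ioi hR.le]
    apply IntegrableOn.union
    · exact (hgc.comp continuous_neg).integrableOn_Ioc
    · have he := (exp_neg_integrableOn_Ioi R hb).const_mul
        ((V (-R))^2 * Real.exp (2 * Real.sqrt α * R))
      refine MeasureTheory.IntegrableOn.congr_fun he ?_ measurableSet_Ioi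
      intro y hy
      have hy' : -y < -R := by simpa using hy
      show V (-R) ^ 2 * Real.exp (2 * Real.sqrt α * R) * Real.exp (-(2 * Real.sqrt α) * y)
        = Vext (-y) ^ 2
      rw [hext3 _ hy', mul_pow, pow_two (Real.exp _), ← Real.exp_add,
        mul_assoc, ← Real.exp_add]
      congr 2
      ring
  -- the integrand of the moving part
  set k : ℝ → ℝ := fun y => F lam a (Vext y) + (α/2) * (Vext y)^2 with hkdef
  have hhc : Continuous (fun y => F lam a (Vext y)) := (F_continuous lam a).comp hVextCont
  have hkc : Continuous k := by
    apply hhc.add (continuous_const.mul hgc)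
  set C : ℝ := (1/2) * (∫ y : ℝ, (deriv Vext y)^2)
      + (α/2) * ((∫ y in Iio (0:ℝ), (Vext y)^2) + (∫ y in Ioi (0:ℝ), (Vext y)^2)) with hCdef
  -- eventual identification of the energy
  have hEeq : (fun ρ : ℝ =>
        (1/2) * (∫ y : ℝ, (deriv Vext y)^2)
          - (∫ y in (-ρ)..ρ, F lam a (Vext y))
          + (α/2) * (∫ y in {z : ℝ | ρ < |z|}, (Vext y)^2))
      =ᶠ[𝓝 R] (fun ρ => C - ∫ y in (-ρ)..ρ, k y) := by
    filter_upwards [Ioi_mem_nhds hR] with ρ hρ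
    have hρ0 : (0:ℝ) < ρ := hρ
    have hset : {z : ℝ | ρ < |z|} = Iio (-ρ) ∪ Ioi ρ := by
      ext z
      simp only [mem_setOf_eq, mem_union, mem_Iio, mem_Ioi, lt_abs]
      constructor
      · rintro (h | h)
        · exact Or.inr h
        · exact Or.inl (by linarith)
      · rintro (h | h)
        · exact Or.inr (by linarith)
        · exact Or.inl h
    have hdisj : Disjoint (Iio (-ρ)) (Ioi ρ) := by
      rw [Set.disjoint_left]
      intro z hz1 hz2
      simp only [mem_Iio] at hz1
      simp only [mem_Ioi] at hz2
      linarith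
    have hIio' : IntegrableOn (fun y => (Vext y)^2) (Iio (-ρ)) :=
      hgIio.mono_set (Iio_subset_Iio (by linarith))
    have hIoi' : IntegrableOn (fun y => (Vext y)^2) (Ioi ρ) :=
      hgIoi.mono_set (Ioi_subset_Ioi hρ0.le)
    have h1 : (∫ y in Ioi (0:ℝ), (Vext y)^2)
        = (∫ y in (0:ℝ)..ρ, (Vext y)^2) + ∫ y in Ioi ρ, (Vext y)^2 := by
      rw [intervalIntegral.integral_of_le hρ0.le,
        ← setIntegral_union (Ioc_disjoint_Ioi le_rfl) measurableSet_Ioi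
          (hgIoi.mono_set Ioc_subset_Ioi_self) hIoi',
        Ioc_union_Ioi_eq_Ioi hρ0.le]
    have h2 : (∫ y in Iio (0:ℝ), (Vext y)^2)
        = (∫ y in Iio (-ρ), (Vext y)^2) + ∫ y in (-ρ)..(0:ℝ), (Vext y)^2 := by
      have hd2 : Disjoint (Iio (-ρ)) (Ico (-ρ) 0) := by
        rw [Set.disjoint_left]
        intro z hz1 hz2
        simp only [mem_Iio] at hz1
        exact absurd hz2.1 (by linarith)
      have hico : IntegrableOn (fun y => (Vext y)^2) (Ico (-ρ) 0) :=
        hgIio.mono_set (fun y hy => hy.2)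
      rw [intervalIntegral.integral_of_le (by linarith : -ρ ≤ (0:ℝ)),
        integral_Ioc_eq_integral_Ioo, ← integral_Ico_eq_integral_Ioo,
        ← setIntegral_union hd2 measurableSet_Ico hIio' hico,
        Iio_union_Ico_eq_Iio (by linarith : -ρ ≤ (0:ℝ))]
    have h3 : (∫ y in (-ρ)..ρ, k y)
        = (∫ y in (-ρ)..ρ, F lam a (Vext y)) + (α/2) * ∫ y in (-ρ)..ρ, (Vext y)^2 := by
      rw [hkdef]
      rw [intervalIntegral.integral_add (hhc.intervalIntegrable _ _)
        ((show Continuous fun y => α/2 * (Vext y)^2 from continuous_const.mul hgc).intervalIntegrable _ _),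
        intervalIntegral.integral_const_mul]
    have h4 : (∫ y in (-ρ)..(0:ℝ), (Vext y)^2) + (∫ y in (0:ℝ)..ρ, (Vext y)^2)
        = ∫ y in (-ρ)..ρ, (Vext y)^2 :=
      intervalIntegral.integral_add_adjacent_intervals
        (hgc.intervalIntegrable _ _) (hgc.intervalIntegrable _ _)
    rw [hset, setIntegral_union hdisj measurableSet_Ioi hIio' hIoi', hCdef, h3, ← h4, h1, h2]
    ring
  -- derivative of the moving part
  have hG : ∀ u : ℝ, HasDerivAt (fun t => ∫ y in (0:ℝ)..t, k y) (k u) u := fun u =>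
    intervalIntegral.integral_hasDerivAt_right (hkc.intervalIntegrable _ _)
      (hkc.stronglyMeasurableAtFilter _ _) hkc.continuousAt
  have hψ : HasDerivAt (fun ρ : ℝ => ∫ y in (-ρ)..ρ, k y) (k R + k (-R)) R := by
    have h1 := hG R
    have h2 := (hG (-R)).comp R (hasDerivAt_neg R)
    have heq : (fun ρ : ℝ => ∫ y in (-ρ)..ρ, k y)
        = fun ρ : ℝ => (∫ y in (0:ℝ)..ρ, k y) - ∫ y in (0:ℝ)..(-ρ), k y := by
      funext ρ
      rw [← intervalIntegral.integral_add_adjacent_intervals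
        (hkc.intervalIntegrable (-ρ) 0) (hkc.intervalIntegrable 0 ρ),
        intervalIntegral.integral_symm 0 (-ρ)]
      ring
    rw [heq]
    have h3 := h1.sub h2
    refine h3.congr_deriv ?_
    ring
  have hEderiv : HasDerivAt (fun ρ : ℝ => C - ∫ y in (-ρ)..ρ, k y)
      (-(k R + k (-R))) R := by
    simpa [Pi.sub_def] using (hasDerivAt_const R C).sub hψ
  have hval : -(k R + k (-R)) = -2 * F lam a (V 0) := by
    have e1 : k R = F lam a (V 0) := by
      rw [hkdef]
      simp only
      rw [hext1 R hmRr]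
      exact hkeyR
    have e2 : k (-R) = F lam a (V 0) := by
      rw [hkdef]
      simp only
      rw [hext1 (-R) hmR]
      exact hkeymR
    rw [e1, e2]; ring
  rw [← hval]
  exact hEeq.hasDerivAt_iff.2 hEderiv
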